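/- arXiv:2102.12258 — 2 statements merged into one kernel-verified Lean document; each statement's English description precedes it below -/
import Mathlib

section
/- For each s ∈ [K], let p_s > 0 with ∑_s p_s = 1, α_s ∈ (0,1], ᾱ = ∑_s p_s α_s, and η(s) ∈ [0,1]. Define H(λ, γ) := ∑_{s=1}^K (1/(2α_s)) · ( |(α_s p_s/ᾱ)(1 − 2η(s)) + γ_s| − p_s α_s/ᾱ − 2α_s λ_s − γ_s )_+ + ∑_s λ_s α_s for (λ, γ) ∈ ℝᴷ × ℝᴷ. If ∑_s γ_s = 0, then H(λ, γ) ≥ ‖γ‖₁/2 − 1, where ‖γ‖₁ = ∑_s |γ_s|. -/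
/-! Each summand is at least `(|γ s| - γ s)/2 - w s` with `w s = p s α s / ᾱ`: minimising the
positive part plus the linear term over `λ s` costs at most a factor `α s ≤ 1`, and
`|c + γ s| ≥ |γ s| - w s` because the perturbation `c` is at most `w s` in size. Summing, `∑ γ s = 0`
and `∑ w s ≤ 1` give the bound. -/

open Finset

lemma half_le_inv_mul_max_sub_add {a M l : ℝ} (ha : 0 < a) (ha1 : a ≤ 1) :
    M / 2 ≤ 1 / (2 * a) * max (M - 2 * a * l) 0 + l * a := by
  rcases le_total (M - 2 * a * l) 0 with h | h
  · rw [max_eq_right h]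
    linarith
  · rw [max_eq_left h]
    have hscale : (M - 2 * a * l) / 2 ≤ 1 / (2 * a) * (M - 2 * a * l) := by
      rw [one_div_mul_eq_div]
      exact div_le_div_of_nonneg_left h (by positivity) (by linarith)
    linarith

lemma abs_mul_one_sub_two_mul_le {w t : ℝ} (hw : 0 ≤ w) (ht : t ∈ Set.Icc (0 : ℝ) 1) :
    |w * (1 - 2 * t)| ≤ w := by
  rw [abs_mul, abs_of_nonneg hw]
  exact mul_le_of_le_one_right hw (abs_le.mpr ⟨by linarith [ht.2], by linarith [ht.1]⟩)

lemma sub_div_two_sub_le_of_abs_le {a w c g l : ℝ} (ha : 0 < a) (ha1 : a ≤ 1) (hc : |c| ≤ w) :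
    (|g| - g) / 2 - w ≤ 1 / (2 * a) * max (|c + g| - w - 2 * a * l - g) 0 + l * a := by
  have hpert : |g| - |c| ≤ |c + g| := by
    simpa [add_comm] using abs_sub_abs_le_abs_add g c
  have hmain := half_le_inv_mul_max_sub_add (M := |c + g| - w - g) (l := l) ha ha1
  rw [show |c + g| - w - g - 2 * a * l = |c + g| - w - 2 * a * l - g by ring] at hmain
  linarith

theorem dual_coercivity_in_gamma_general (K : ℕ) (p α η : Fin K → ℝ)
    (hp : ∀ s, 0 < p s)
    (hα : ∀ s, α s ∈ Set.Ioc (0 : ℝ) 1)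
    (hη : ∀ s, η s ∈ Set.Icc (0 : ℝ) 1)
    (ᾱ : ℝ) (hᾱ : ᾱ = ∑ s, p s * α s)
    (l γ : Fin K → ℝ) (hγ : ∑ s, γ s = 0) :
    (∑ s, (1 / (2 * α s)) *
        max (|(α s * p s / ᾱ) * (1 - 2 * η s) + γ s|
          - p s * α s / ᾱ - 2 * α s * l s - γ s) 0)
      + ∑ s, l s * α s
      ≥ (∑ s, |γ s|) / 2 - 1 := by
  have hᾱ_nonneg : 0 ≤ ᾱ := hᾱ ▸ sum_nonneg fun s _ => (mul_pos (hp s) (hα s).1).le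
  have hw_nonneg (s : Fin K) : 0 ≤ p s * α s / ᾱ :=
    div_nonneg (mul_pos (hp s) (hα s).1).le hᾱ_nonneg
  have hw_sum : ∑ s, p s * α s / ᾱ ≤ 1 := by
    rw [← sum_div, ← hᾱ]
    -- also covers `K = 0`, where `ᾱ = 0` and the sum is `0 / 0 = 0`
    exact div_self_le_one ᾱ
  have hterm (s : Fin K) := sub_div_two_sub_le_of_abs_le (c := (α s * p s / ᾱ) * (1 - 2 * η s))
    (w := p s * α s / ᾱ) (g := γ s) (l := l s) (hα s).1 (hα s).2
    (by rw [mul_comm (α s)]; exact abs_mul_one_sub_two_mul_le (hw_nonneg s) (hη s))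
  have hsum := sum_le_sum fun s (_ : s ∈ univ) => hterm s
  rw [sum_add_distrib, sum_sub_distrib, ← sum_div, sum_sub_distrib, hγ] at hsum
  linarith

theorem dual_coercivity_in_gamma (K : ℕ) (p α η : Fin K → ℝ)
    (hp : ∀ s, 0 < p s) (hpsum : ∑ s, p s = 1)
    (hα : ∀ s, α s ∈ Set.Ioc (0 : ℝ) 1)
    (hη : ∀ s, η s ∈ Set.Icc (0 : ℝ) 1)
    (ᾱ : ℝ) (hᾱ : ᾱ = ∑ s, p s * α s)
    (l γ : Fin K → ℝ) (hγ : ∑ s, γ s = 0) :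
    (∑ s, (1 / (2 * α s)) *
        max (|(α s * p s / ᾱ) * (1 - 2 * η s) + γ s|
          - p s * α s / ᾱ - 2 * α s * l s - γ s) 0)
      + ∑ s, l s * α s
      ≥ (∑ s, |γ s|) / 2 - 1 :=
  dual_coercivity_in_gamma_general K p α η hp hα hη ᾱ hᾱ l γ hγ
end

section
/- With the same notation, for all (λ, γ) ∈ ℝᴷ × ℝᴷ: H(λ, γ) ≥ ∑_{s=1}^K [ min(α_s, 1 − α_s)·|λ_s| ] − ∑_{s=1}^K (p_s/ᾱ)·η(s)·max(2α_s, 1). Key to this is the elementary inequality: for real λ, α ∈ (0,1), c ≥ 0, one has (−c − λ)_+ + λα ≥ min(α, 1−α)·|λ| − c·max(2α, 1). -/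
theorem dual_coercivity_in_lambda (K : ℕ) (p α η : Fin K → ℝ)
    (hp : ∀ s, 0 < p s) (hpsum : ∑ s, p s = 1)
    (hα : ∀ s, α s ∈ Set.Ioo (0 : ℝ) 1)
    (hη : ∀ s, η s ∈ Set.Icc (0 : ℝ) 1)
    (ᾱ : ℝ) (hᾱ : ᾱ = ∑ s, p s * α s) :
    (∀ l γ : Fin K → ℝ,
      (∑ s, (1 / (2 * α s)) *
          max (|(α s * p s / ᾱ) * (1 - 2 * η s) + γ s|
            - p s * α s / ᾱ - 2 * α s * l s - γ s) 0)
        + ∑ s, l s * α s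
      ≥ (∑ s, min (α s) (1 - α s) * |l s|)
        - ∑ s, (p s / ᾱ) * η s * max (2 * α s) 1) ∧
    (∀ l a c : ℝ, 0 < a → a < 1 → 0 ≤ c →
      max (-c - l) 0 + l * a ≥ min a (1 - a) * |l| - c * max (2 * a) 1) := by
  have scalar : ∀ l a c : ℝ, 0 < a → a < 1 → 0 ≤ c →
      max (-c - l) 0 + l * a ≥ min a (1 - a) * |l| - c * max (2 * a) 1 := by
    intro l a c ha ha1 hc
    rcases le_or_gt 0 l with h | h
    · rw [abs_of_nonneg h]
      have h1 : (0:ℝ) ≤ max (-c-l) 0 := le_max_right _ _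
      have h2 : min a (1-a) ≤ a := min_le_left _ _
      have h3 : (1:ℝ) ≤ max (2*a) 1 := le_max_right _ _
      nlinarith
    · rw [abs_of_neg h]
      have h1 : -c - l ≤ max (-c-l) 0 := le_max_left _ _
      have h2 : min a (1-a) ≤ 1 - a := min_le_right _ _
      have h3 : (1:ℝ) ≤ max (2*a) 1 := le_max_right _ _
      nlinarith
  refine ⟨?_, scalar⟩
  intro l γ
  have hK : K ≠ 0 := by rintro rfl; simp at hpsum
  haveI : Nonempty (Fin K) := Fin.pos_iff_nonempty.mp (Nat.pos_of_ne_zero hK)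
  have hᾱpos : 0 < ᾱ := by
    rw [hᾱ]
    exact Finset.sum_pos (fun s _ => mul_pos (hp s) (hα s).1) Finset.univ_nonempty
  rw [ge_iff_le, ← Finset.sum_add_distrib, ← Finset.sum_sub_distrib]
  apply Finset.sum_le_sum
  intro s _
  obtain ⟨ha0, ha1⟩ := hα s
  obtain ⟨hη0, hη1⟩ := hη s
  set c : ℝ := p s / ᾱ * η s with hcdef
  have hc : 0 ≤ c := mul_nonneg (div_nonneg (hp s).le hᾱpos.le) hη0
  have key : (1 / (2 * α s)) *
      max (|(α s * p s / ᾱ) * (1 - 2 * η s) + γ s|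
        - p s * α s / ᾱ - 2 * α s * l s - γ s) 0 ≥ max (-c - l s) 0 := by
    have hA : (α s * p s / ᾱ) * (1 - 2 * η s) + γ s ≤
        |(α s * p s / ᾱ) * (1 - 2 * η s) + γ s| := le_abs_self _
    have hX : 2 * α s * (-c - l s) ≤
        |(α s * p s / ᾱ) * (1 - 2 * η s) + γ s|
          - p s * α s / ᾱ - 2 * α s * l s - γ s := by
      have : 2 * α s * (-c - l s) =
          ((α s * p s / ᾱ) * (1 - 2 * η s) + γ s)
            - p s * α s / ᾱ - 2 * α s * l s - γ s := by
        rw [hcdef]; field_simp; ring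
      linarith
    have hmax : 2 * α s * max (-c - l s) 0 ≤
        max (|(α s * p s / ᾱ) * (1 - 2 * η s) + γ s|
          - p s * α s / ᾱ - 2 * α s * l s - γ s) 0 := by
      calc 2 * α s * max (-c - l s) 0 = max (2 * α s * (-c - l s)) 0 := by
            rw [mul_max_of_nonneg _ _ (by linarith : (0:ℝ) ≤ 2 * α s), mul_zero]
        _ ≤ _ := max_le_max hX le_rfl
    have h2a : 0 < 2 * α s := by linarith
    rw [ge_iff_le, one_div, inv_mul_eq_div]
    exact (le_div_iff₀' h2a).mpr hmax
  have hs := scalar (l s) (α s) c ha0 ha1 hc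
  have hmax1 : c * max (2 * α s) 1 = p s / ᾱ * η s * max (2 * α s) 1 := by rw [hcdef]
  linarith [key, hs]
end
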